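/- arXiv:2302.04624 — 3 statements merged into one kernel-verified Lean document; each statement's English description precedes it below -/
import Mathlib

section
/- For every graph G and every positive integer α, the tree-width of G satisfies tw(G) ≤ 3·ecrw_α(G) + 2α − 1. -/
open SimpleGraph

universe u

/-- A tree-cut decomposition of a graph `G`: a finite tree `T` together with
pairwise disjoint (possibly empty) bags covering the vertex set of `G`. -/
structure TreeCutDecomp {V : Type u} (G : SimpleGraph V) where
  β : Type
  fintypeβ : Fintype β
  T : SimpleGraph β
  isTree : T.IsTree
  bag : β → Set V
  disj : Pairwise fun s t => Disjoint (bag s) (bag t)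
  covers : ∀ v : V, ∃ t, v ∈ bag t

namespace TreeCutDecomp

variable {V : Type u} {G : SimpleGraph V}

/-- The edge `e` of `G` crosses the bag at node `t`: its endpoints lie in bag-unions of
two distinct components of `T - t`. -/
def Crosses (D : TreeCutDecomp G) (t : D.β) (e : Sym2 V) : Prop :=
  e ∈ G.edgeSet ∧ ∃ (u v : V) (s₁ s₂ : D.β) (h₁ : s₁ ≠ t) (h₂ : s₂ ≠ t),
    e = s(u, v) ∧ u ∈ D.bag s₁ ∧ v ∈ D.bag s₂ ∧
    ¬ (D.T.induce {x | x ≠ t}).Reachable ⟨s₁, h₁⟩ ⟨s₂, h₂⟩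

/-- The number of edges crossing the bag at node `t`. -/
noncomputable def crossNum (D : TreeCutDecomp G) (t : D.β) : ℕ :=
  {e : Sym2 V | D.Crosses t e}.ncard

/-- The crossing number of the decomposition is at most `k`. -/
def CrossLE (D : TreeCutDecomp G) (k : ℕ) : Prop := ∀ t, D.crossNum t ≤ k

/-- The thickness (maximum bag size) of the decomposition is at most `a`. -/
def ThickLE (D : TreeCutDecomp G) (a : ℕ) : Prop := ∀ t, (D.bag t).ncard ≤ a

end TreeCutDecomp

/-- The `α`-edge-crossing width: minimum crossing number over tree-cut decompositions
of thickness at most `α`. -/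
noncomputable def ecrwA {V : Type u} (G : SimpleGraph V) (a : ℕ) : ℕ :=
  sInf {k | ∃ D : TreeCutDecomp G, D.ThickLE a ∧ D.CrossLE k}

/-- The edge-crossing width: minimum over tree-cut decompositions of the maximum of the
thickness and the crossing number. -/
noncomputable def ecrw {V : Type u} (G : SimpleGraph V) : ℕ :=
  sInf {k | ∃ D : TreeCutDecomp G, D.ThickLE k ∧ D.CrossLE k}

/-- A tree-decomposition of a graph `G`. -/
structure TreeDecomp {V : Type u} (G : SimpleGraph V) where
  β : Type
  fintypeβ : Fintype β
  T : SimpleGraph β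
  isTree : T.IsTree
  bag : β → Set V
  covers : ∀ v : V, ∃ t, v ∈ bag t
  coversEdge : ∀ u v : V, G.Adj u v → ∃ t, u ∈ bag t ∧ v ∈ bag t
  connBag : ∀ v : V, (T.induce {t | v ∈ bag t}).Connected

/-- The tree-width of `G`: minimum over tree-decompositions of (max bag size − 1). -/
noncomputable def treewidth {V : Type u} (G : SimpleGraph V) : ℕ :=
  sInf {w | ∃ D : TreeDecomp G, ∀ t, (D.bag t).ncard ≤ w + 1}

/-!
Root the tree-cut decomposition at a node `r` and widen the bag at each node `t` by the bag at its
parent and by the endpoints of the edges crossing `t`. On the same tree this is a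
tree-decomposition: an edge of `G` lies inside one bag, joins a bag to the bag at its parent, or
crosses the node next to one of its ends on the tree path between them; and the nodes whose widened
bag contains `v` form a subtree, because an edge `vz` crossing `t` crosses every node other than
the node of `v` on the tree path from it to `t`. A widened bag has at most `2α + 2k ≤ 3k + 2α`
vertices, where `k = ecrw_α(G)` is attained because for `α ≥ 1` singleton bags give a
decomposition.
-/

namespace SimpleGraph

variable {β : Type*} {T : SimpleGraph β}

lemma IsAcyclic.not_reachable_induce_ne_iff (hT : T.IsAcyclic) {a b t : β} (p : T.Walk a b)
    (hp : p.IsPath) (ha : a ≠ t) (hb : b ≠ t) :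
    ¬ (T.induce {x | x ≠ t}).Reachable ⟨a, ha⟩ ⟨b, hb⟩ ↔ t ∈ p.support := by
  constructor
  · intro hnr
    by_contra htp
    exact hnr ⟨p.induce {x | x ≠ t} fun x hx (hxt : x = t) => htp (hxt ▸ hx)⟩
  · rintro htp ⟨w⟩
    classical
    let w' : T.Walk a b := w.map (Embedding.induce {x | x ≠ t}).toHom
    have hq : w'.bypass = p := congrArg Subtype.val <|
      (hT.subsingleton_path a b).elim ⟨_, w'.bypass_isPath⟩ ⟨p, hp⟩
    obtain ⟨⟨x, hx⟩, -, hxt⟩ := List.mem_map.1 <|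
      (Walk.support_map _ w) ▸ Walk.support_bypass_subset_support w' (hq ▸ htp)
    exact hx hxt

namespace IsTree

/-- The neighbour of `t` on the path from `t` to the root `r` (and `r` itself if `t = r`). -/
noncomputable def parent (hT : T.IsTree) (r t : β) : β :=
  (hT.existsUnique_path t r).exists.choose.snd

lemma parent_eq_snd (hT : T.IsTree) {r t : β} (p : T.Walk t r) (hp : p.IsPath) :
    hT.parent r t = p.snd := by
  rw [parent, (hT.existsUnique_path t r).unique (hT.existsUnique_path t r).exists.choose_spec hp]

@[simp]
lemma parent_self (hT : T.IsTree) (r : β) : hT.parent r r = r := by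
  simp [hT.parent_eq_snd .nil .nil]

lemma adj_parent (hT : T.IsTree) {r t : β} (h : t ≠ r) : T.Adj t (hT.parent r t) := by
  obtain ⟨p, hp, -⟩ := hT.existsUnique_path t r
  rw [hT.parent_eq_snd p hp]
  exact Walk.adj_snd (Walk.not_nil_of_ne h)

lemma parent_eq_or_parent_eq_of_adj (hT : T.IsTree) (r : β) {a b : β} (h : T.Adj a b) :
    hT.parent r a = b ∨ hT.parent r b = a := by
  obtain ⟨p, hp, -⟩ := hT.existsUnique_path a r
  by_cases hb : b ∈ p.support
  · exact .inl <| (hT.parent_eq_snd p hp).trans (hT.isAcyclic.eq_snd_of_adj_start hp h hb).symm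
  · exact .inr <| (hT.parent_eq_snd _ (hp.cons hb)).trans (Walk.snd_cons p h.symm)

end IsTree

end SimpleGraph

lemma Sym2.ncard_setOf_exists_mem_le {V : Type*} [Finite V] (E : Set (Sym2 V)) :
    {x | ∃ e ∈ E, x ∈ e}.ncard ≤ 2 * E.ncard := by
  classical
  have hunion : {x | ∃ e ∈ E, x ∈ e} = ⋃ e ∈ E.toFinite.toFinset, (e.toFinset : Set V) := by
    ext; simp [Sym2.mem_toFinset]
  have htwo (e : Sym2 V) : (e.toFinset : Set V).ncard ≤ 2 := by
    rw [Set.ncard_coe_finset, Sym2.card_toFinset]; split <;> omega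
  calc {x | ∃ e ∈ E, x ∈ e}.ncard ≤ ∑ e ∈ E.toFinite.toFinset, (e.toFinset : Set V).ncard :=
        hunion ▸ Finset.set_ncard_biUnion_le _ _
    _ ≤ E.toFinite.toFinset.card * 2 := Finset.sum_le_card_nsmul _ _ _ fun e _ => htwo e
    _ = 2 * E.ncard := by rw [Set.ncard_eq_toFinset_card E, mul_comm]

namespace TreeCutDecomp

section

variable {V : Type u} {G : SimpleGraph V} (D : TreeCutDecomp G)

lemma eq_of_mem_bag {v : V} {s t : D.β} (hs : v ∈ D.bag s) (ht : v ∈ D.bag t) : s = t := by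
  by_contra hst
  exact Set.disjoint_left.mp (D.disj hst) hs ht

noncomputable def home (v : V) : D.β := (D.covers v).choose

lemma mem_bag_home (v : V) : v ∈ D.bag (D.home v) := (D.covers v).choose_spec

lemma home_eq_of_mem_bag {v : V} {t : D.β} (h : v ∈ D.bag t) : D.home v = t :=
  D.eq_of_mem_bag (D.mem_bag_home v) h

lemma crosses_mk_iff {u v : V} {t : D.β} (p : D.T.Walk (D.home u) (D.home v)) (hp : p.IsPath) :
    D.Crosses t s(u, v) ↔ G.Adj u v ∧ D.home u ≠ t ∧ D.home v ≠ t ∧ t ∈ p.support := by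
  constructor
  · rintro ⟨huv, u', v', s₁, s₂, h₁, h₂, heq, hu', hv', hnr⟩
    obtain rfl := D.home_eq_of_mem_bag hu'
    obtain rfl := D.home_eq_of_mem_bag hv'
    rcases Sym2.eq_iff.mp heq with ⟨rfl, rfl⟩ | ⟨rfl, rfl⟩
    · exact ⟨huv, h₁, h₂, (D.isTree.isAcyclic.not_reachable_induce_ne_iff p hp h₁ h₂).mp hnr⟩
    · exact ⟨huv, h₂, h₁, (D.isTree.isAcyclic.not_reachable_induce_ne_iff p hp h₂ h₁).mp
        fun h => hnr h.symm⟩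
  · rintro ⟨huv, hu, hv, htp⟩
    exact ⟨huv, u, v, D.home u, D.home v, hu, hv, rfl, D.mem_bag_home u, D.mem_bag_home v,
      (D.isTree.isAcyclic.not_reachable_induce_ne_iff p hp hu hv).mpr htp⟩

lemma crossNum_le_ncard_edgeSet [Finite V] (t : D.β) : D.crossNum t ≤ G.edgeSet.ncard :=
  Set.ncard_le_ncard (fun _ h => h.1)

variable (r : D.β)

def wideBag (t : D.β) : Set V :=
  D.bag t ∪ D.bag (D.isTree.parent r t) ∪ {x | ∃ e, D.Crosses t e ∧ x ∈ e}

lemma mem_wideBag_home (v : V) : v ∈ D.wideBag r (D.home v) :=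
  .inl (.inl (D.mem_bag_home v))

lemma exists_mem_wideBag_of_adj {u v : V} (huv : G.Adj u v) :
    ∃ t, u ∈ D.wideBag r t ∧ v ∈ D.wideBag r t := by
  by_cases hhome : D.home u = D.home v
  · exact ⟨D.home u, D.mem_wideBag_home r u, hhome ▸ D.mem_wideBag_home r v⟩
  by_cases hadj : D.T.Adj (D.home u) (D.home v)
  · rcases D.isTree.parent_eq_or_parent_eq_of_adj r hadj with h | h
    · exact ⟨D.home u, D.mem_wideBag_home r u, .inl (.inr (h ▸ D.mem_bag_home v))⟩
    · exact ⟨D.home v, .inl (.inr (h ▸ D.mem_bag_home u)), D.mem_wideBag_home r v⟩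
  -- the homes are at distance at least two, so the second vertex of the path separates them
  obtain ⟨p, hp, -⟩ := D.isTree.existsUnique_path (D.home u) (D.home v)
  have hsnd : D.T.Adj (D.home u) p.snd := Walk.adj_snd (Walk.not_nil_of_ne hhome)
  have hcross : D.Crosses p.snd s(u, v) := (D.crosses_mk_iff p hp).mpr
    ⟨huv, hsnd.ne, fun h => hadj (h ▸ hsnd), p.getVert_mem_support 1⟩
  exact ⟨p.snd, .inr ⟨_, hcross, Sym2.mem_mk_left u v⟩, .inr ⟨_, hcross, Sym2.mem_mk_right u v⟩⟩

lemma reachable_home_of_crosses {v z : V} {t : D.β} (hc : D.Crosses t s(v, z))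
    (ht : v ∈ D.wideBag r t) :
    (D.T.induce {s | v ∈ D.wideBag r s}).Reachable ⟨t, ht⟩ ⟨D.home v, D.mem_wideBag_home r v⟩ := by
  classical
  obtain ⟨p, hp, -⟩ := D.isTree.existsUnique_path (D.home v) (D.home z)
  obtain ⟨huv, hv, hz, htp⟩ := (D.crosses_mk_iff p hp).mp hc
  -- every node on the path from `home v` to `t` other than `home v` is crossed by `vz` as well
  have hmem : ∀ s ∈ (p.takeUntil t htp).support, v ∈ D.wideBag r s := by
    intro s hs
    by_cases hsv : D.home v = s
    · exact hsv ▸ D.mem_wideBag_home r v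
    have hzs : D.home z ≠ s := fun h =>
      Walk.endpoint_notMem_support_takeUntil hp htp hz (h ▸ hs)
    exact .inr ⟨_, (D.crosses_mk_iff p hp).mpr
      ⟨huv, hsv, hzs, p.support_takeUntil_subset_support htp hs⟩, Sym2.mem_mk_left v z⟩
  exact ⟨((p.takeUntil t htp).induce _ hmem).reverse⟩

lemma reachable_home_of_mem_wideBag {v : V} {t : D.β} (ht : v ∈ D.wideBag r t) :
    (D.T.induce {s | v ∈ D.wideBag r s}).Reachable ⟨t, ht⟩ ⟨D.home v, D.mem_wideBag_home r v⟩ := by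
  rcases ht with (hbag | hparent) | ⟨e, hc, hve⟩
  · obtain rfl := D.home_eq_of_mem_bag hbag
    rfl
  · have hhome := D.home_eq_of_mem_bag hparent
    by_cases htr : t = r
    · subst htr
      rw [IsTree.parent_self] at hhome
      subst hhome
      rfl
    · have hadj := D.isTree.adj_parent htr
      rw [← hhome] at hadj
      exact Adj.reachable (induce_adj.2 hadj)
  · obtain ⟨z, rfl⟩ := Sym2.mem_iff_exists.mp hve
    exact D.reachable_home_of_crosses r hc _

lemma connected_induce_wideBag (v : V) : (D.T.induce {t | v ∈ D.wideBag r t}).Connected := by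
  have : Nonempty {t | v ∈ D.wideBag r t} := ⟨⟨_, D.mem_wideBag_home r v⟩⟩
  refine Connected.mk fun ⟨s, hs⟩ ⟨t, ht⟩ => ?_
  exact (D.reachable_home_of_mem_wideBag r hs).trans (D.reachable_home_of_mem_wideBag r ht).symm

noncomputable def toTreeDecomp : TreeDecomp G where
  β := D.β
  fintypeβ := D.fintypeβ
  T := D.T
  isTree := D.isTree
  bag := D.wideBag r
  covers v := ⟨_, D.mem_wideBag_home r v⟩
  coversEdge _ _ := D.exists_mem_wideBag_of_adj r
  connBag := D.connected_induce_wideBag r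

lemma ncard_wideBag_le [Finite V] {a k : ℕ} (hthick : D.ThickLE a) (hcross : D.CrossLE k)
    (t : D.β) : (D.wideBag r t).ncard ≤ 2 * a + 2 * k := by
  calc (D.wideBag r t).ncard
      ≤ (D.bag t).ncard + (D.bag (D.isTree.parent r t)).ncard
        + {x | ∃ e, D.Crosses t e ∧ x ∈ e}.ncard :=
        (Set.ncard_union_le _ _).trans (Nat.add_le_add_right (Set.ncard_union_le _ _) _)
    _ ≤ a + a + 2 * k := by
        gcongr
        · exact hthick t
        · exact hthick _
        · exact (Sym2.ncard_setOf_exists_mem_le {e | D.Crosses t e}).trans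
            (Nat.mul_le_mul_left 2 (hcross t))
    _ = 2 * a + 2 * k := by ring

end

variable {V : Type u} [Finite V]

/-- Singleton bags at the leaves of a star whose centre has an empty bag. -/
noncomputable def singletons (G : SimpleGraph V) : TreeCutDecomp G where
  β := Option (Fin (Nat.card V))
  fintypeβ := inferInstance
  T := starGraph none
  isTree := isTree_starGraph none
  bag o := {v | some (Finite.equivFin V v) = o}
  disj _ _ hst := Set.disjoint_left.mpr fun _ hs ht => hst (hs.symm.trans ht)
  covers _ := ⟨_, rfl⟩

lemma thickLE_singletons (G : SimpleGraph V) : (singletons G).ThickLE 1 := fun _ =>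
  (Set.ncard_le_one_iff).mpr fun ha hb =>
    (Finite.equivFin V).injective (Option.some_injective _ (ha.trans hb.symm))

lemma exists_thickLE_crossLE_ecrwA (G : SimpleGraph V) {a : ℕ} (ha : 0 < a) :
    ∃ D : TreeCutDecomp G, D.ThickLE a ∧ D.CrossLE (ecrwA G a) :=
  Nat.sInf_mem (s := {k | ∃ D : TreeCutDecomp G, D.ThickLE a ∧ D.CrossLE k})
    ⟨_, singletons G, fun t => (thickLE_singletons G t).trans ha,
    (singletons G).crossNum_le_ncard_edgeSet⟩

end TreeCutDecomp

/-- For every graph `G` and positive integer `α`, `tw(G) ≤ 3·ecrw_α(G) + 2α − 1`. -/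
theorem stmt_3 {V : Type u} [Fintype V] (G : SimpleGraph V) (α : ℕ) (hα : 0 < α) :
    treewidth G ≤ 3 * ecrwA G α + 2 * α - 1 := by
  obtain ⟨D, hthick, hcross⟩ := TreeCutDecomp.exists_thickLE_crossLE_ecrwA G hα
  obtain ⟨r⟩ := D.isTree.connected.nonempty
  exact Nat.sInf_le ⟨D.toTreeDecomp r, fun t => (D.ncard_wideBag_le r hthick hcross t).trans
    (by omega)⟩
end

section
/- For every graph G, ecrw(G) ≤ tpw(G), where tpw denotes tree-partition-width. -/
open SimpleGraph

universe u

/-- A tree-cut decomposition is a tree-partition: every edge lies within a bag or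
between bags at adjacent nodes of the tree. -/
def TreeCutDecomp.IsTreePartition {V : Type u} {G : SimpleGraph V} (D : TreeCutDecomp G) : Prop :=
  ∀ u v : V, G.Adj u v →
    (∃ t, u ∈ D.bag t ∧ v ∈ D.bag t) ∨ (∃ t s, D.T.Adj t s ∧ u ∈ D.bag t ∧ v ∈ D.bag s)

/-- The tree-partition-width of `G`: minimum thickness over tree-partitions. -/
noncomputable def tpw {V : Type u} (G : SimpleGraph V) : ℕ :=
  sInf {a | ∃ D : TreeCutDecomp G, D.IsTreePartition ∧ D.ThickLE a}

/-! An edge of a tree-partition lies inside one bag or joins the bags of two adjacent nodes;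
deleting any other node of the tree keeps those nodes connected, so no edge crosses any node.
A tree-partition therefore has crossing number `0`, and its thickness alone bounds `ecrw`. -/

namespace TreeCutDecomp

variable {V : Type u} {G : SimpleGraph V}

def single (G : SimpleGraph V) : TreeCutDecomp G where
  β := Unit
  fintypeβ := inferInstance
  T := ⊥
  isTree := ⟨Connected.mk preconnected_bot, isAcyclic_bot⟩
  bag _ := Set.univ
  disj a b h := (h (Subsingleton.elim a b)).elim
  covers v := ⟨(), Set.mem_univ v⟩

theorem isTreePartition_single (G : SimpleGraph V) : (single G).IsTreePartition :=
  fun u v _ => Or.inl ⟨(), Set.mem_univ u, Set.mem_univ v⟩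

theorem thickLE_single (G : SimpleGraph V) : (single G).ThickLE (Nat.card V) :=
  fun _ => (Set.ncard_univ V).le

theorem eq_of_mem_bag_s4 (D : TreeCutDecomp G) {a b : D.β} {x : V}
    (ha : x ∈ D.bag a) (hb : x ∈ D.bag b) : a = b := by
  by_contra hne
  exact (D.disj hne).ne_of_mem ha hb rfl

theorem IsTreePartition.not_crosses {D : TreeCutDecomp G} (hD : D.IsTreePartition)
    (t : D.β) (e : Sym2 V) : ¬ D.Crosses t e := by
  rintro ⟨he, u, v, s₁, s₂, h₁, h₂, rfl, hu, hv, hnr⟩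
  rcases hD u v he with ⟨s, hus, hvs⟩ | ⟨a, b, hab, hua, hvb⟩
  · obtain rfl := D.eq_of_mem_bag_s4 hu hus
    obtain rfl := D.eq_of_mem_bag_s4 hv hvs
    exact hnr .rfl
  · obtain rfl := D.eq_of_mem_bag_s4 hu hua
    obtain rfl := D.eq_of_mem_bag_s4 hv hvb
    exact hnr (Adj.reachable hab)

theorem IsTreePartition.crossLE_zero {D : TreeCutDecomp G} (hD : D.IsTreePartition) :
    D.CrossLE 0 := by
  intro t
  simp [crossNum, hD.not_crosses t]

end TreeCutDecomp

open TreeCutDecomp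

theorem ecrw_le_of_isTreePartition {V : Type u} {G : SimpleGraph V} {D : TreeCutDecomp G}
    {a : ℕ} (hD : D.IsTreePartition) (ha : D.ThickLE a) : ecrw G ≤ a :=
  Nat.sInf_le ⟨D, ha, fun t => (hD.crossLE_zero t).trans (Nat.zero_le a)⟩

theorem exists_isTreePartition_thickLE_tpw {V : Type u} (G : SimpleGraph V) :
    ∃ D : TreeCutDecomp G, D.IsTreePartition ∧ D.ThickLE (tpw G) :=
  Nat.sInf_mem (s := {a | ∃ D : TreeCutDecomp G, D.IsTreePartition ∧ D.ThickLE a})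
    ⟨Nat.card V, single G, isTreePartition_single G, thickLE_single G⟩

theorem stmt_4_general {V : Type u} (G : SimpleGraph V) :
    ecrw G ≤ tpw G := by
  obtain ⟨D, hD, hthick⟩ := exists_isTreePartition_thickLE_tpw G
  exact ecrw_le_of_isTreePartition hD hthick

/-- For every graph `G`, `ecrw(G) ≤ tpw(G)`. -/
theorem stmt_4 {V : Type u} [Fintype V] (G : SimpleGraph V) :
    ecrw G ≤ tpw G :=
  stmt_4_general G
end

section
/- For every integer k ≥ 3, the (6k²−6k−1)-fan has edge-crossing width at least k. -/
/-!
Let `D` be a tree-cut decomposition of the `n`-fan with thickness and crossing number at most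
`m`, and root its tree at the node `r` whose bag holds the apex. Label each path vertex by the
neighbour of `r` on the tree path towards its node (or by `r` itself). A label class has at most
`2m` vertices: at most `m` lie in the bag of the label `c`, and every other one sends an apex
edge across `c`. Two consecutive path vertices with different labels either have one end in the
bag of `r` or span an edge crossing `r`, so the label changes at most `3m` times along the path
and there are at most `3m + 1` labels. Hence `n ≤ 2m(3m + 1)`, which is smaller than
`6k² − 6k − 1` once `m < k`.
-/

open SimpleGraph

universe u

/-- The `n`-fan: a path on `n` vertices (`Sum.inl i`, `i = 0, …, n-1`) together with an
apex vertex (`Sum.inr ()`) adjacent to all path vertices. -/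
def fan (n : ℕ) : SimpleGraph (Fin n ⊕ Unit) :=
  SimpleGraph.fromRel fun x y =>
    match x, y with
    | Sum.inl i, Sum.inl j => (j : ℕ) = (i : ℕ) + 1
    | Sum.inr _, Sum.inl _ => True
    | _, _ => False

open Finset

namespace SimpleGraph

variable {β : Type*} {T : SimpleGraph β}

lemma exists_walk_of_reachable_induce {s : Set β} {a b : s} (h : (T.induce s).Reachable a b) :
    ∃ p : T.Walk a b, ∀ x ∈ p.support, x ∈ s := by
  obtain ⟨W⟩ := h
  refine ⟨W.map (Embedding.induce s).toHom, fun x hx => ?_⟩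
  obtain ⟨y, -, rfl⟩ := List.mem_map.mp (Walk.support_map _ W ▸ hx)
  exact y.prop

lemma IsAcyclic.support_subset_of_isPath (hT : T.IsAcyclic) {a b : β} {p : T.Walk a b}
    (hp : p.IsPath) (q : T.Walk a b) : p.support ⊆ q.support := by
  classical
  have hpq : p = q.bypass :=
    congrArg Subtype.val ((hT.subsingleton_path a b).elim ⟨p, hp⟩ ⟨_, q.bypass_isPath⟩)
  exact hpq ▸ q.support_bypass_subset_support

lemma IsAcyclic.not_reachable_induce_of_mem_support (hT : T.IsAcyclic) {a b t : β}
    {p : T.Walk a b} (hp : p.IsPath) (ht : t ∈ p.support) (ha : a ≠ t) (hb : b ≠ t) :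
    ¬ (T.induce {x | x ≠ t}).Reachable ⟨a, ha⟩ ⟨b, hb⟩ := fun h => by
  obtain ⟨q, hq⟩ := exists_walk_of_reachable_induce h
  exact hq t (hT.support_subset_of_isPath hp q ht) rfl

namespace IsTree

variable (hT : T.IsTree) {r s : β}

noncomputable def path (r s : β) : T.Walk r s := (hT.existsUnique_path r s).choose

lemma isPath_path (r s : β) : (hT.path r s).IsPath := (hT.existsUnique_path r s).choose_spec.1

lemma eq_path {q : T.Walk r s} (hq : q.IsPath) : q = hT.path r s :=
  (hT.existsUnique_path r s).unique hq (hT.isPath_path r s)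

/-- The neighbour of `r` on the tree path towards `s`; junk value `r` when `s = r`. -/
noncomputable def branch (r s : β) : β := (hT.path r s).snd

lemma adj_branch (hs : s ≠ r) : T.Adj r (hT.branch r s) :=
  Walk.adj_snd (Walk.not_nil_of_ne hs.symm)

lemma branch_eq_root_iff : hT.branch r s = r ↔ s = r := by
  refine ⟨fun h => by_contra fun hs => (hT.adj_branch hs).ne h.symm, ?_⟩
  rintro rfl
  rw [branch, ← hT.eq_path Walk.IsPath.nil]
  rfl

lemma not_reachable_induce_branch (hs : s ≠ r) (hsb : s ≠ hT.branch r s) :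
    ¬ (T.induce {x | x ≠ hT.branch r s}).Reachable ⟨r, (hT.adj_branch hs).ne⟩ ⟨s, hsb⟩ :=
  hT.isAcyclic.not_reachable_induce_of_mem_support (hT.isPath_path r s)
    (List.mem_of_mem_tail (Walk.snd_mem_tail_support (Walk.not_nil_of_ne hs.symm))) _ _

lemma not_reachable_induce_root {s₁ s₂ : β} (hs₁ : s₁ ≠ r) (hs₂ : s₂ ≠ r)
    (h : hT.branch r s₁ ≠ hT.branch r s₂) :
    ¬ (T.induce {x | x ≠ r}).Reachable ⟨s₁, hs₁⟩ ⟨s₂, hs₂⟩ := fun hreach => by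
  classical
  obtain ⟨W, hW⟩ := exists_walk_of_reachable_induce hreach
  set p := hT.path r s₁
  have hp : ¬ p.Nil := Walk.not_nil_of_ne hs₁.symm
  have hr_tail : r ∉ p.tail.support := by
    have hnodup := (hT.isPath_path r s₁).support_nodup
    rw [← Walk.cons_support_tail hp] at hnodup
    exact (List.nodup_cons.mp hnodup).1
  -- `q` leads from `branch r s₁` to `s₂` avoiding `r`, so the edge from `r` followed by `q` is
  -- the tree path from `r` to `s₂`.
  set q := (p.tail.append W).bypass
  have hr_q : r ∉ q.support := fun hr => by
    have hr' := (p.tail.append W).support_bypass_subset_support hr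
    rw [Walk.support_append] at hr'
    rcases List.mem_append.mp hr' with hr' | hr'
    · exact hr_tail hr'
    · exact hW r (List.mem_of_mem_tail hr') rfl
  have hpath := hT.eq_path ((Walk.bypass_isPath _).cons hr_q (h := Walk.adj_snd hp))
  apply h
  rw [branch, branch, ← hpath, Walk.snd_cons]

end IsTree

end SimpleGraph

namespace TreeCutDecomp

variable {V : Type*} {G : SimpleGraph V}

def singleBag (G : SimpleGraph V) : TreeCutDecomp G where
  β := Unit
  fintypeβ := inferInstance
  T := ⊥
  isTree := IsTree.of_subsingleton
  bag _ := Set.univ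
  disj a b hab := (hab (Subsingleton.elim a b)).elim
  covers _ := ⟨(), trivial⟩

lemma singleBag_thickLE : (singleBag G).ThickLE (Nat.card V) :=
  fun _ => (Set.ncard_univ V).le

lemma singleBag_crossLE (k : ℕ) : (singleBag G).CrossLE k := fun t => by
  have hempty : {e | (singleBag G).Crosses t e} = ∅ :=
    Set.eq_empty_of_forall_notMem fun _ ⟨_, _, _, s₁, _, h₁, _⟩ =>
      h₁ (Subsingleton.elim (α := Unit) s₁ t)
  rw [crossNum, hempty, Set.ncard_empty]
  exact k.zero_le

variable (D : TreeCutDecomp G)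

noncomputable def node (v : V) : D.β := (D.covers v).choose

lemma mem_bag_node (v : V) : v ∈ D.bag (D.node v) := (D.covers v).choose_spec

lemma crosses_of_not_reachable {u v : V} (huv : G.Adj u v) {t : D.β} (hu : D.node u ≠ t)
    (hv : D.node v ≠ t) (h : ¬ (D.T.induce {x | x ≠ t}).Reachable ⟨_, hu⟩ ⟨_, hv⟩) :
    D.Crosses t s(u, v) :=
  ⟨huv, u, v, _, _, hu, hv, rfl, D.mem_bag_node u, D.mem_bag_node v, h⟩

variable [Finite V] {m : ℕ} {α : Type*} {s : Finset α} {t : D.β}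

lemma card_le_of_injOn_node_eq (hth : D.ThickLE m) {f : α → V} (hf : Set.InjOn f s)
    (hnode : ∀ a ∈ s, D.node (f a) = t) : #s ≤ m := by
  rw [← Set.ncard_coe_finset]
  refine (Set.ncard_le_ncard_of_injOn f (fun a ha => ?_) hf (Set.toFinite _)).trans (hth t)
  exact hnode a ha ▸ D.mem_bag_node (f a)

lemma card_le_of_injOn_crosses (hcr : D.CrossLE m) {f : α → Sym2 V} (hf : Set.InjOn f s)
    (hcross : ∀ a ∈ s, D.Crosses t (f a)) : #s ≤ m := by
  rw [← Set.ncard_coe_finset]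
  exact (Set.ncard_le_ncard_of_injOn f hcross hf (Set.toFinite _)).trans (hcr t)

end TreeCutDecomp

lemma le_ecrw_of_forall {V : Type*} {G : SimpleGraph V} {k : ℕ}
    (h : ∀ (m : ℕ) (D : TreeCutDecomp G), D.ThickLE m → D.CrossLE m → k ≤ m) : k ≤ ecrw G :=
  le_csInf ⟨_, _, TreeCutDecomp.singleBag_thickLE, TreeCutDecomp.singleBag_crossLE _⟩
    fun _ ⟨D, hth, hcr⟩ => h _ D hth hcr

lemma Finset.card_image_range_le {α : Type*} [DecidableEq α] (f : ℕ → α) (n : ℕ) :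
    #((range n).image f) ≤ #{j ∈ range (n - 1) | f j ≠ f (j + 1)} + 1 := by
  suffices h : ∀ n, #((range (n + 1)).image f) ≤ #{j ∈ range n | f j ≠ f (j + 1)} + 1 by
    rcases n with _ | n
    · simp
    · exact h n
  intro n
  induction n with
  | zero => simp
  | succ n ih =>
    have hfilter : {j ∈ range (n + 1) | f j ≠ f (j + 1)} =
        if f n ≠ f (n + 1) then insert n {j ∈ range n | f j ≠ f (j + 1)}
        else {j ∈ range n | f j ≠ f (j + 1)} := by
      rw [range_add_one, filter_insert]
    rw [range_add_one (n := n + 1), image_insert, hfilter]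
    by_cases hf : f n = f (n + 1)
    · rw [if_neg (not_not.mpr hf), ← hf, insert_eq_of_mem (mem_image_of_mem f (by simp))]
      exact ih
    · rw [if_pos hf, card_insert_of_notMem (a := n) (by simp)]
      exact (card_insert_le _ _).trans (by omega)

namespace fan

/-- Path vertex `i`; indexing by `ℕ` keeps consecutiveness easy to state, at the price of a
junk value (the apex) for `i ≥ n`. -/
def pathVertex (n i : ℕ) : Fin n ⊕ Unit := if h : i < n then Sum.inl ⟨i, h⟩ else Sum.inr ()

variable {n i : ℕ}

lemma pathVertex_of_lt (h : i < n) : pathVertex n i = Sum.inl ⟨i, h⟩ := dif_pos h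

lemma pathVertex_injOn : Set.InjOn (pathVertex n) (range n) := fun i hi j hj hij => by
  rw [coe_range, Set.mem_Iio] at hi hj
  rw [pathVertex_of_lt hi, pathVertex_of_lt hj] at hij
  simpa using hij

lemma pathVertex_succ_injOn : Set.InjOn (fun i => pathVertex n (i + 1)) (range (n - 1)) :=
  fun i hi j hj hij => by
    simp only [coe_range, Set.mem_Iio] at hi hj
    have := pathVertex_injOn (by simp; omega) (by simp; omega) hij
    omega

lemma apexEdge_injOn : Set.InjOn (fun i => s(Sum.inr (), pathVertex n i)) (range n) :=
  fun _ hi _ hj hij => pathVertex_injOn hi hj (Sym2.congr_right.mp hij)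

lemma pathEdge_injOn :
    Set.InjOn (fun i => s(pathVertex n i, pathVertex n (i + 1))) (range (n - 1)) :=
  fun i hi j hj hij => by
    rw [coe_range, Set.mem_Iio] at hi hj
    simp only [pathVertex_of_lt (show i < n by omega), pathVertex_of_lt (show i + 1 < n by omega),
      pathVertex_of_lt (show j < n by omega), pathVertex_of_lt (show j + 1 < n by omega),
      Sym2.eq_iff, Sum.inl.injEq, Fin.mk.injEq] at hij
    omega

lemma adj_apex_pathVertex (h : i < n) : (fan n).Adj (Sum.inr ()) (pathVertex n i) := by
  simp [fan, pathVertex_of_lt h]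

lemma adj_pathVertex_succ (h : i + 1 < n) :
    (fan n).Adj (pathVertex n i) (pathVertex n (i + 1)) := by
  simp [fan, pathVertex_of_lt h, pathVertex_of_lt (show i < n by omega)]

end fan

namespace TreeCutDecomp

open fan
open scoped Classical

variable {n m : ℕ} (D : TreeCutDecomp (fan n))

noncomputable def apexNode : D.β := D.node (Sum.inr ())

noncomputable def fanLabel (i : ℕ) : D.β := D.isTree.branch D.apexNode (D.node (pathVertex n i))

lemma card_fanLabel_eq_le (hth : D.ThickLE m) (hcr : D.CrossLE m) (u : D.β) :
    #{i ∈ range n | D.fanLabel i = u} ≤ 2 * m := by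
  have hsub : {i ∈ range n | D.fanLabel i = u} ⊆
      {i ∈ range n | D.node (pathVertex n i) = u} ∪
      {i ∈ range n | D.Crosses u s(Sum.inr (), pathVertex n i)} := by
    intro i
    simp only [mem_union, mem_filter]
    rintro ⟨hi, rfl⟩
    by_cases hnode : D.node (pathVertex n i) = D.fanLabel i
    · exact Or.inl ⟨hi, hnode⟩
    have hroot : D.node (pathVertex n i) ≠ D.apexNode := fun h =>
      hnode (by rw [fanLabel, h, D.isTree.branch_eq_root_iff.mpr rfl])
    exact Or.inr ⟨hi, D.crosses_of_not_reachable (adj_apex_pathVertex (mem_range.mp hi)) _ hnode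
      (D.isTree.not_reachable_induce_branch hroot hnode)⟩
  calc _ ≤ _ := card_le_card hsub
    _ ≤ _ := card_union_le _ _
    _ ≤ m + m := add_le_add
      (D.card_le_of_injOn_node_eq hth (pathVertex_injOn.mono (coe_subset.mpr (filter_subset _ _)))
        fun _ hi => (mem_filter.mp hi).2)
      (D.card_le_of_injOn_crosses hcr (apexEdge_injOn.mono (coe_subset.mpr (filter_subset _ _)))
        fun _ hi => (mem_filter.mp hi).2)
    _ = 2 * m := (two_mul m).symm

lemma card_fanLabel_ne_succ_le (hth : D.ThickLE m) (hcr : D.CrossLE m) :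
    #{j ∈ range (n - 1) | D.fanLabel j ≠ D.fanLabel (j + 1)} ≤ 3 * m := by
  have hsub : {j ∈ range (n - 1) | D.fanLabel j ≠ D.fanLabel (j + 1)} ⊆
      {j ∈ range (n - 1) | D.node (pathVertex n j) = D.apexNode} ∪
      {j ∈ range (n - 1) | D.node (pathVertex n (j + 1)) = D.apexNode} ∪
      {j ∈ range (n - 1) | D.Crosses D.apexNode s(pathVertex n j, pathVertex n (j + 1))} := by
    intro j
    simp only [mem_union, mem_filter]
    rintro ⟨hj, hne⟩
    by_cases h₁ : D.node (pathVertex n j) = D.apexNode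
    · exact Or.inl (Or.inl ⟨hj, h₁⟩)
    by_cases h₂ : D.node (pathVertex n (j + 1)) = D.apexNode
    · exact Or.inl (Or.inr ⟨hj, h₂⟩)
    refine Or.inr ⟨hj, D.crosses_of_not_reachable ?_ h₁ h₂
      (D.isTree.not_reachable_induce_root h₁ h₂ hne)⟩
    exact adj_pathVertex_succ (by rw [mem_range] at hj; omega)
  calc _ ≤ _ := card_le_card hsub
    _ ≤ _ := card_union_le _ _
    _ ≤ (m + m) + m := add_le_add ((card_union_le _ _).trans (add_le_add
        (D.card_le_of_injOn_node_eq hth (pathVertex_injOn.mono (coe_subset.mpr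
          ((filter_subset _ _).trans (range_subset_range.mpr (n.sub_le 1)))))
          fun _ hj => (mem_filter.mp hj).2)
        (D.card_le_of_injOn_node_eq hth
          (pathVertex_succ_injOn.mono (coe_subset.mpr (filter_subset _ _)))
          fun _ hj => (mem_filter.mp hj).2)))
      (D.card_le_of_injOn_crosses hcr (pathEdge_injOn.mono (coe_subset.mpr (filter_subset _ _)))
        fun _ hj => (mem_filter.mp hj).2)
    _ = 3 * m := by ring

lemma fan_size_le_of_thickLE_of_crossLE (hth : D.ThickLE m) (hcr : D.CrossLE m) :
    n ≤ 2 * m * (3 * m + 1) := by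
  calc n = #(range n) := (card_range n).symm
    _ ≤ 2 * m * #((range n).image D.fanLabel) :=
      card_le_mul_card_image _ _ fun u _ => D.card_fanLabel_eq_le hth hcr u
    _ ≤ 2 * m * (3 * m + 1) := by
      gcongr
      exact (card_image_range_le _ n).trans (by gcongr; exact D.card_fanLabel_ne_succ_le hth hcr)

end TreeCutDecomp

/-- For every integer `k ≥ 3`, the `(6k² − 6k − 1)`-fan has edge-crossing width
at least `k`. -/
theorem stmt_8 (k : ℕ) (hk : 3 ≤ k) : k ≤ ecrw (fan (6 * k ^ 2 - 6 * k - 1)) := by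
  refine le_ecrw_of_forall fun m D hth hcr => ?_
  have hn := D.fan_size_le_of_thickLE_of_crossLE hth hcr
  by_contra! hm
  obtain ⟨j, rfl⟩ : ∃ j, k = j + 1 := ⟨k - 1, by omega⟩
  have hmj : 2 * m * (3 * m + 1) ≤ 2 * j * (3 * j + 1) := by gcongr <;> omega
  have hsq : 6 * (j + 1) ^ 2 = 6 * j ^ 2 + 2 * j + 6 * (j + 1) + 4 * j := by ring
  have hj : 2 * j * (3 * j + 1) = 6 * j ^ 2 + 2 * j := by ring
  omega
end
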